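/- If G is a simple graph with maximum degree Δ(G) such that the subgraph induced by the vertices of degree at least 3 is a forest, and each edge e of G is assigned a list L(e) of colors with |L(e)| ≥ 4·Δ(G) − 3, then G admits a strong edge coloring in which every edge e receives a color from its own list L(e). -/
import Mathlib

open SimpleGraph Finset

section StrongEdgeAux

variable {V : Type*}

lemma forest_exists_leaf {W : Type*} [DecidableEq W] (H : SimpleGraph W)
    [DecidableRel H.Adj] (hac : H.IsAcyclic) (s : Finset W) (hs : s.Nonempty) :
    ∃ v ∈ s, (s.filter (H.Adj v)).card ≤ 1 := by
  by_contra hcon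
  push_neg at hcon
  -- every vertex of s has ≥ 2 neighbors in s; build arbitrarily long paths
  have grow : ∀ n : ℕ, ∃ (u w : W) (p : H.Walk u w), p.IsPath ∧
      (∀ x ∈ p.support, x ∈ s) ∧ p.length = n := by
    intro n
    induction n with
    | zero =>
      obtain ⟨v, hv⟩ := hs
      exact ⟨v, v, SimpleGraph.Walk.nil, by simp, by simp [hv], rfl⟩
    | succ n ih =>
      obtain ⟨u, w, p, hp, hsup, hlen⟩ := ih
      have hu : u ∈ s := hsup u p.start_mem_support
      have h2 : 2 ≤ (s.filter (H.Adj u)).card := hcon u hu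
      -- each neighbor x of u in s either extends the path or yields s(x,u) ∈ p.edges
      have hkey : ∀ x, H.Adj u x → x ∈ s → x ∈ p.support → s(x, u) ∈ p.edges := by
        intro x hadj hxs hxsup
        by_contra hxe
        have hq : (p.takeUntil x hxsup).IsPath := hp.takeUntil hxsup
        have hcyc : (SimpleGraph.Walk.cons hadj.symm (p.takeUntil x hxsup)).IsCycle := by
          rw [SimpleGraph.Walk.cons_isCycle_iff]
          exact ⟨hq, fun hmem => hxe (SimpleGraph.Walk.edges_takeUntil_subset _ _ hmem)⟩
        exact hac _ hcyc
      -- edges of p containing u determine at most one bad neighbor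
      have hbad : ∀ x y, s(x, u) ∈ p.edges → s(y, u) ∈ p.edges → x = y := by
        intro x y hx hy
        cases p with
        | nil => simp at hx
        | cons hadj q =>
          rename_i b
          have hqs : u ∉ q.support := by
            rw [SimpleGraph.Walk.cons_isPath_iff] at hp
            exact hp.2
          have hform : ∀ z, s(z, u) ∈ (SimpleGraph.Walk.cons hadj q).edges → z = b := by
            intro z hz
            rw [SimpleGraph.Walk.edges_cons, List.mem_cons] at hz
            rcases hz with hz | hz
            · rw [Sym2.eq_iff] at hz
              rcases hz with ⟨h1, h2⟩ | ⟨h1, h2⟩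
              · exact h1.trans h2
              · exact h1
            · exact absurd (SimpleGraph.Walk.snd_mem_support_of_mem_edges q hz) hqs
          rw [hform x hx, hform y hy]
      obtain ⟨x₁, hx₁, x₂, hx₂, hne⟩ := Finset.one_lt_card.mp h2
      simp only [Finset.mem_filter] at hx₁ hx₂
      have : ∃ x, H.Adj u x ∧ x ∈ s ∧ x ∉ p.support := by
        by_contra hno
        push_neg at hno
        have e1 := hkey x₁ hx₁.2 hx₁.1 (hno x₁ hx₁.2 hx₁.1)
        have e2 := hkey x₂ hx₂.2 hx₂.1 (hno x₂ hx₂.2 hx₂.1)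
        exact hne (hbad _ _ e1 e2)
      obtain ⟨x, hadj, hxs, hxsup⟩ := this
      refine ⟨x, w, SimpleGraph.Walk.cons hadj.symm p, ?_, ?_, by simp [hlen]⟩
      · rw [SimpleGraph.Walk.cons_isPath_iff]; exact ⟨hp, hxsup⟩
      · intro y hy
        rw [SimpleGraph.Walk.support_cons, List.mem_cons] at hy
        rcases hy with rfl | hy
        · exact hxs
        · exact hsup y hy
  obtain ⟨u, w, p, hp, hsup, hlen⟩ := grow s.card
  have h1 : p.support.toFinset ⊆ s := fun x hx => hsup x (List.mem_toFinset.mp hx)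
  have h2 : p.support.toFinset.card = s.card + 1 := by
    rw [List.toFinset_card_of_nodup hp.support_nodup, SimpleGraph.Walk.length_support, hlen]
  have := Finset.card_le_card h1
  omega

section
variable {V : Type*} [Fintype V] (G : SimpleGraph V) [DecidableRel G.Adj]

/-- transfer of the leaf lemma to subsets of big vertices of G -/
lemma big_leaf [DecidableEq V] (hforest : (G.induce {v : V | 3 ≤ G.degree v}).IsAcyclic)
    (s : Finset V) (hsbig : ∀ v ∈ s, 3 ≤ G.degree v) (hs : s.Nonempty) :
    ∃ v ∈ s, (s.filter (G.Adj v)).card ≤ 1 := by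
  classical
  set B : Set V := {v : V | 3 ≤ G.degree v} with hB
  let H := G.induce B
  let s' : Finset B := s.subtype (· ∈ B)
  have hs' : s'.Nonempty := by
    obtain ⟨v, hv⟩ := hs
    exact ⟨⟨v, hsbig v hv⟩, by simp [s', hv]⟩
  obtain ⟨v', hv's, hv'⟩ := forest_exists_leaf H hforest s' hs'
  refine ⟨v'.1, by simpa [s'] using hv's, ?_⟩
  have hcard : (s.filter (G.Adj v'.1)).card = (s'.filter (H.Adj v')).card := by
    have himg : (s'.filter (H.Adj v')).image (Subtype.val) = s.filter (G.Adj v'.1) := by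
      ext x
      simp only [Finset.mem_image, Finset.mem_filter, Finset.mem_subtype, comap_adj,
        Function.Embedding.coe_subtype, Subtype.exists, s', H]
      constructor
      · rintro ⟨a, ha, ⟨has, hadj⟩, rfl⟩
        exact ⟨has, hadj⟩
      · rintro ⟨hxs, hadj⟩
        exact ⟨x, hsbig x hxs, ⟨hxs, hadj⟩, rfl⟩
    rw [← himg, Finset.card_image_of_injective _ Subtype.val_injective]
  omega

/-- existence of a depth function on the big vertices -/
lemma exists_dep [DecidableEq V] (hforest : (G.induce {v : V | 3 ≤ G.degree v}).IsAcyclic) :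
    ∃ dep : V → ℕ,
      (∀ a b, 3 ≤ G.degree a → 3 ≤ G.degree b → G.Adj a b →
        dep a = dep b + 1 ∨ dep b = dep a + 1) ∧
      (∀ a b c, 3 ≤ G.degree a → 3 ≤ G.degree b → 3 ≤ G.degree c →
        G.Adj a b → G.Adj a c → dep a = dep b + 1 → dep a = dep c + 1 → b = c) := by
  classical
  -- prove by strong induction on finsets of big vertices
  suffices h : ∀ (n : ℕ) (s : Finset V), s.card ≤ n → (∀ v ∈ s, 3 ≤ G.degree v) →
      ∃ dep : V → ℕ,
      (∀ a ∈ s, ∀ b ∈ s, G.Adj a b → dep a = dep b + 1 ∨ dep b = dep a + 1) ∧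
      (∀ a ∈ s, ∀ b ∈ s, ∀ c ∈ s, G.Adj a b → G.Adj a c →
        dep a = dep b + 1 → dep a = dep c + 1 → b = c) by
    obtain ⟨dep, h1, h2⟩ := h (Finset.univ.filter (fun v => 3 ≤ G.degree v)).card
      (Finset.univ.filter (fun v => 3 ≤ G.degree v)) le_rfl (by simp)
    refine ⟨dep, fun a b ha hb => h1 a (by simp [ha]) b (by simp [hb]),
      fun a b c ha hb hc => h2 a (by simp [ha]) b (by simp [hb]) c (by simp [hc])⟩
  intro n
  induction n with
  | zero =>
    intro s hcard _
    have : s = ∅ := Finset.card_eq_zero.mp (Nat.le_zero.mp hcard)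
    subst this
    exact ⟨fun _ => 0, by simp, by simp⟩
  | succ n ih =>
    intro s hcard hbig
    rcases s.eq_empty_or_nonempty with rfl | hs
    · exact ⟨fun _ => 0, by simp, by simp⟩
    obtain ⟨v, hvs, hv1⟩ := big_leaf G hforest s hbig hs
    set t := s.erase v with ht
    have htcard : t.card ≤ n := by
      rw [ht, Finset.card_erase_of_mem hvs]
      have := Finset.card_pos.mpr hs
      omega
    obtain ⟨dep, h1, h2⟩ := ih t htcard (fun w hw => hbig w (Finset.mem_of_mem_erase hw))
    have hnb : (t.filter (G.Adj v)) = (s.filter (G.Adj v)) := by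
      ext x
      simp only [Finset.mem_filter, ht, Finset.mem_erase]
      constructor
      · rintro ⟨⟨_, hx⟩, hadj⟩; exact ⟨hx, hadj⟩
      · rintro ⟨hx, hadj⟩; exact ⟨⟨fun h => (G.ne_of_adj hadj).symm (by rw [h]), hx⟩, hadj⟩
    have hnb1 : (t.filter (G.Adj v)).card ≤ 1 := by rw [hnb]; exact hv1
    by_cases hne : (t.filter (G.Adj v)).Nonempty
    · obtain ⟨u, hu⟩ := hne
      have huniq : ∀ x ∈ t.filter (G.Adj v), x = u :=
        fun x hx => Finset.card_le_one.mp hnb1 x hx u hu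
      have hadj_u : ∀ x ∈ s, G.Adj v x → x = u := by
        intro x hx hadj
        have hxv : x ≠ v := fun h => G.irrefl (h ▸ hadj)
        exact huniq x (Finset.mem_filter.mpr ⟨Finset.mem_erase.mpr ⟨hxv, hx⟩, hadj⟩)
      rw [Finset.mem_filter] at hu
      have huv : u ≠ v := (Finset.mem_erase.mp hu.1).1
      have hdt : ∀ x ∈ t, Function.update dep v (dep u + 1) x = dep x := by
        intro x hx
        exact Function.update_of_ne (Finset.mem_erase.mp hx).1 _ _
      have hdv : Function.update dep v (dep u + 1) v = dep u + 1 := Function.update_self _ _ _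
      have hmemt : ∀ x ∈ s, x ≠ v → x ∈ t := fun x hx hxv => Finset.mem_erase.mpr ⟨hxv, hx⟩
      refine ⟨Function.update dep v (dep u + 1), ?_, ?_⟩
      · intro a ha b hb hadj
        rcases eq_or_ne a v with rfl | hav
        · have hb' : b = u := hadj_u b hb hadj
          left
          rw [hb', hdv, hdt u hu.1]
        · rcases eq_or_ne b v with rfl | hbv
          · have ha' : a = u := hadj_u a ha hadj.symm
            right
            rw [ha', hdv, hdt u hu.1]
          · rw [hdt a (hmemt a ha hav), hdt b (hmemt b hb hbv)]
            exact h1 a (hmemt a ha hav) b (hmemt b hb hbv) hadj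
      · intro a ha b hb c hc hab hac hdb hdc
        rcases eq_or_ne a v with rfl | hav
        · rw [hadj_u b hb hab, hadj_u c hc hac]
        · have hat : a ∈ t := hmemt a ha hav
          rcases eq_or_ne b v with rfl | hbv
          · exfalso
            have ha' : a = u := hadj_u a ha hab.symm
            rw [hdt a hat, hdv, ha'] at hdb
            omega
          · rcases eq_or_ne c v with rfl | hcv
            · exfalso
              have ha' : a = u := hadj_u a ha hac.symm
              rw [hdt a hat, hdv, ha'] at hdc
              omega
            · have hbt : b ∈ t := hmemt b hb hbv
              have hct : c ∈ t := hmemt c hc hcv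
              rw [hdt a hat, hdt b hbt] at hdb
              rw [hdt a hat, hdt c hct] at hdc
              exact h2 a hat b hbt c hct hab hac hdb hdc
    · -- v has no neighbor in s at all
      have hnov : ∀ x ∈ s, ¬ G.Adj v x := by
        intro x hx hadj
        have hxv : x ≠ v := fun h => G.irrefl (h ▸ hadj)
        exact hne ⟨x, Finset.mem_filter.mpr ⟨Finset.mem_erase.mpr ⟨hxv, hx⟩, hadj⟩⟩
      have hmemt : ∀ x ∈ s, x ≠ v → x ∈ t := fun x hx hxv => Finset.mem_erase.mpr ⟨hxv, hx⟩
      refine ⟨dep, ?_, ?_⟩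
      · intro a ha b hb hadj
        rcases eq_or_ne a v with rfl | hav
        · exact absurd hadj (hnov b hb)
        · rcases eq_or_ne b v with rfl | hbv
          · exact absurd hadj.symm (hnov a ha)
          · exact h1 a (hmemt a ha hav) b (hmemt b hb hbv) hadj
      · intro a ha b hb c hc hab hac hdb hdc
        rcases eq_or_ne a v with rfl | hav
        · exact absurd hab (hnov b hb)
        · rcases eq_or_ne b v with rfl | hbv
          · exact absurd hab.symm (hnov a ha)
          · rcases eq_or_ne c v with rfl | hcv
            · exact absurd hac.symm (hnov a ha)
            · exact h2 a (hmemt a ha hav) b (hmemt b hb hbv) c (hmemt c hc hcv) hab hac hdb hdc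
end

/-- the conflict relation between edges -/
def conflictRel (G : SimpleGraph V) (e f : Sym2 V) : Prop :=
  (∃ v, v ∈ e ∧ v ∈ f) ∨
    ∃ g ∈ G.edgeSet, (∃ v, v ∈ e ∧ v ∈ g) ∧ ∃ w, w ∈ g ∧ w ∈ f

lemma conflictRel_symm {G : SimpleGraph V} {e f : Sym2 V} (h : conflictRel G e f) :
    conflictRel G f e := by
  rcases h with ⟨v, hv1, hv2⟩ | ⟨g, hg, ⟨v, hv1, hv2⟩, ⟨w, hw1, hw2⟩⟩
  · exact Or.inl ⟨v, hv2, hv1⟩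
  · exact Or.inr ⟨g, hg, ⟨w, hw2, hw1⟩, ⟨v, hv2, hv1⟩⟩

lemma edge_other {G : SimpleGraph V} : ∀ f ∈ G.edgeSet, ∀ w ∈ f, ∃ y, G.Adj w y ∧ f = s(w, y) := by
  intro f
  induction f using Sym2.ind with
  | _ a b =>
    intro hf w hw
    rw [SimpleGraph.mem_edgeSet] at hf
    rw [Sym2.mem_iff] at hw
    rcases hw with rfl | rfl
    · exact ⟨b, hf, rfl⟩
    · exact ⟨a, hf.symm, Sym2.eq_swap.symm⟩

lemma edge_repr {G : SimpleGraph V} : ∀ f ∈ G.edgeSet, ∃ a b, G.Adj a b ∧ f = s(a, b) := by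
  intro f
  induction f using Sym2.ind with
  | _ a b =>
    intro hf
    exact ⟨a, b, (SimpleGraph.mem_edgeSet G).mp hf, rfl⟩

lemma conflictRel_iff {G : SimpleGraph V} {e f : Sym2 V} (he : e ∈ G.edgeSet) :
    conflictRel G e f ↔ ∃ w, w ∈ f ∧ (w ∈ e ∨ ∃ v, v ∈ e ∧ G.Adj v w) := by
  constructor
  · rintro (⟨v, hv1, hv2⟩ | ⟨g, hg, ⟨v, hv1, hv2⟩, ⟨w, hw1, hw2⟩⟩)
    · exact ⟨v, hv2, Or.inl hv1⟩
    · obtain ⟨y, hadj, rfl⟩ := edge_other g hg v hv2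
      rw [Sym2.mem_iff] at hw1
      rcases hw1 with rfl | rfl
      · exact ⟨w, hw2, Or.inl hv1⟩
      · exact ⟨w, hw2, Or.inr ⟨v, hv1, hadj⟩⟩
  · rintro ⟨w, hwf, hwe | ⟨v, hve, hadj⟩⟩
    · exact Or.inl ⟨w, hwe, hwf⟩
    · exact Or.inr ⟨s(v, w), (SimpleGraph.mem_edgeSet G).mpr hadj,
        ⟨v, hve, Sym2.mem_mk_left v w⟩, ⟨w, Sym2.mem_mk_right v w, hwf⟩⟩

/-- conflict set of an edge within a finset of edges -/
noncomputable def conflictSet (G : SimpleGraph V) (S : Finset (Sym2 V)) (e : Sym2 V) :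
    Finset (Sym2 V) :=
  @Finset.filter _ (fun f => f ≠ e ∧ conflictRel G e f) (Classical.decPred _) S

lemma mem_conflictSet {G : SimpleGraph V} {S : Finset (Sym2 V)} {e f : Sym2 V} :
    f ∈ conflictSet G S e ↔ f ∈ S ∧ f ≠ e ∧ conflictRel G e f := by
  rw [conflictSet]
  exact @Finset.mem_filter _ _ (Classical.decPred _) _ _

section
variable [Fintype V] [DecidableEq V] (G : SimpleGraph V) [DecidableRel G.Adj]

lemma edge_mem_incidenceFinset {u v : V} (h : G.Adj u v) :
    s(u, v) ∈ G.incidenceFinset u := by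
  rw [SimpleGraph.mem_incidenceFinset]
  exact (G.mem_incidenceSet u v).mpr h

lemma conflictSet_subset {S : Finset (Sym2 V)} (hS : S ⊆ G.edgeFinset) {u v : V}
    (huv : G.Adj u v) :
    conflictSet G S s(u, v) ⊆
      ((G.incidenceFinset u).erase s(u, v)) ∪ (((G.incidenceFinset v).erase s(u, v)) ∩ S)
      ∪ ((G.neighborFinset u).erase v).biUnion
          (fun w => ((G.incidenceFinset w).erase s(u, w)) ∩ S)
      ∪ ((G.neighborFinset v).erase u).biUnion
          (fun w => ((G.incidenceFinset w).erase s(v, w)) ∩ S) := by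
  intro f hf
  rw [mem_conflictSet] at hf
  obtain ⟨hfS, hfne, hconf⟩ := hf
  have hfe : f ∈ G.edgeSet := SimpleGraph.mem_edgeFinset.mp (hS hfS)
  have hmemA : u ∈ f → f ∈ ((G.incidenceFinset u).erase s(u, v)) := by
    intro hu
    exact Finset.mem_erase.mpr ⟨hfne, by
      rw [SimpleGraph.mem_incidenceFinset]; exact ⟨hfe, hu⟩⟩
  have hmemB : v ∈ f → f ∈ (((G.incidenceFinset v).erase s(u, v)) ∩ S) := by
    intro hv
    exact Finset.mem_inter.mpr ⟨Finset.mem_erase.mpr ⟨hfne, by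
      rw [SimpleGraph.mem_incidenceFinset]; exact ⟨hfe, hv⟩⟩, hfS⟩
  rw [conflictRel_iff ((SimpleGraph.mem_edgeSet G).mpr huv)] at hconf
  obtain ⟨w, hwf, hcase⟩ := hconf
  rcases hcase with hwe | ⟨x, hxe, hadj⟩
  · rw [Sym2.mem_iff] at hwe
    rcases hwe with rfl | rfl
    · exact Finset.mem_union_left _ (Finset.mem_union_left _ (Finset.mem_union_left _ (hmemA hwf)))
    · exact Finset.mem_union_left _ (Finset.mem_union_left _ (Finset.mem_union_right _ (hmemB hwf)))
  · rw [Sym2.mem_iff] at hxe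
    rcases hxe with h | h <;> rw [h] at hadj
    · -- x = u, G.Adj u w
      by_cases hwv : w = v
      · subst hwv
        exact Finset.mem_union_left _ (Finset.mem_union_left _
          (Finset.mem_union_right _ (hmemB hwf)))
      · by_cases hfuw : f = s(u, w)
        · refine Finset.mem_union_left _ (Finset.mem_union_left _ (Finset.mem_union_left _
            (hmemA ?_)))
          rw [hfuw]; exact Sym2.mem_mk_left u w
        · refine Finset.mem_union_left _ (Finset.mem_union_right _ ?_)
          refine Finset.mem_biUnion.mpr ⟨w, Finset.mem_erase.mpr ⟨hwv,
            (SimpleGraph.mem_neighborFinset G u w).mpr hadj⟩, ?_⟩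
          exact Finset.mem_inter.mpr ⟨Finset.mem_erase.mpr ⟨hfuw, by
            rw [SimpleGraph.mem_incidenceFinset]; exact ⟨hfe, hwf⟩⟩, hfS⟩
    · -- x = v, G.Adj v w
      by_cases hwu : w = u
      · subst hwu
        exact Finset.mem_union_left _ (Finset.mem_union_left _
          (Finset.mem_union_left _ (hmemA hwf)))
      · by_cases hfvw : f = s(v, w)
        · refine Finset.mem_union_left _ (Finset.mem_union_left _ (Finset.mem_union_right _
            (hmemB ?_)))
          rw [hfvw]; exact Sym2.mem_mk_left v w
        · refine Finset.mem_union_right _ ?_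
          refine Finset.mem_biUnion.mpr ⟨w, Finset.mem_erase.mpr ⟨hwu,
            (SimpleGraph.mem_neighborFinset G v w).mpr hadj⟩, ?_⟩
          exact Finset.mem_inter.mpr ⟨Finset.mem_erase.mpr ⟨hfvw, by
            rw [SimpleGraph.mem_incidenceFinset]; exact ⟨hfe, hwf⟩⟩, hfS⟩

lemma cardA (u v : V) (huv : G.Adj u v) :
    ((G.incidenceFinset u).erase s(u, v)).card = G.degree u - 1 := by
  rw [Finset.card_erase_of_mem (edge_mem_incidenceFinset G huv),
    SimpleGraph.card_incidenceFinset_eq_degree]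

lemma cardB (u v : V) (huv : G.Adj u v) {S : Finset (Sym2 V)} :
    (((G.incidenceFinset v).erase s(u, v)) ∩ S).card ≤ G.degree v - 1 := by
  calc (((G.incidenceFinset v).erase s(u, v)) ∩ S).card
      ≤ ((G.incidenceFinset v).erase s(u, v)).card :=
        Finset.card_le_card (Finset.inter_subset_left)
    _ = G.degree v - 1 := by
        rw [Sym2.eq_swap, Finset.card_erase_of_mem (edge_mem_incidenceFinset G huv.symm),
          SimpleGraph.card_incidenceFinset_eq_degree]

end

lemma biUnion_split_bound {α β : Type*} [DecidableEq α] [DecidableEq β] (N P : Finset α)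
    (hPN : P ⊆ N) (F : α → Finset β) (K : ℕ)
    (h1 : ∀ w ∈ N, w ∉ P → (F w).card ≤ 1) (h2 : ∀ w ∈ P, (F w).card ≤ K) :
    (N.biUnion F).card ≤ P.card * K + (N.card - P.card) := by
  calc (N.biUnion F).card ≤ ∑ w ∈ N, (F w).card := Finset.card_biUnion_le
    _ = ∑ w ∈ N \ P, (F w).card + ∑ w ∈ P, (F w).card := (Finset.sum_sdiff hPN).symm
    _ ≤ (N \ P).card * 1 + P.card * K := by
        gcongr ?_ + ?_
        · rw [← smul_eq_mul]
          exact Finset.sum_le_card_nsmul _ _ _ (fun x hx =>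
            h1 x (Finset.mem_sdiff.mp hx).1 (Finset.mem_sdiff.mp hx).2)
        · rw [← smul_eq_mul]
          exact Finset.sum_le_card_nsmul _ _ _ h2
    _ ≤ P.card * K + (N.card - P.card) := by
        rw [Finset.card_sdiff_of_subset hPN]
        omega


section
variable [Fintype V] [DecidableEq V] (G : SimpleGraph V) [DecidableRel G.Adj]

lemma master_bound {S : Finset (Sym2 V)} (hS : S ⊆ G.edgeFinset) {u v : V} (huv : G.Adj u v)
    (ku kv : ℕ)
    (hu : (((G.neighborFinset u).erase v).biUnion
      (fun w => ((G.incidenceFinset w).erase s(u, w)) ∩ S)).card ≤ ku)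
    (hv : (((G.neighborFinset v).erase u).biUnion
      (fun w => ((G.incidenceFinset w).erase s(v, w)) ∩ S)).card ≤ kv)
    (kB : ℕ)
    (hB : (((G.incidenceFinset v).erase s(u, v)) ∩ S).card ≤ kB) :
    (conflictSet G S s(u, v)).card ≤ (G.degree u - 1) + kB + ku + kv := by
  calc (conflictSet G S s(u, v)).card
      ≤ (((G.incidenceFinset u).erase s(u, v)) ∪ (((G.incidenceFinset v).erase s(u, v)) ∩ S)
        ∪ ((G.neighborFinset u).erase v).biUnion
            (fun w => ((G.incidenceFinset w).erase s(u, w)) ∩ S)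
        ∪ ((G.neighborFinset v).erase u).biUnion
            (fun w => ((G.incidenceFinset w).erase s(v, w)) ∩ S)).card :=
        Finset.card_le_card (conflictSet_subset G hS huv)
    _ ≤ (((G.incidenceFinset u).erase s(u, v)) ∪ (((G.incidenceFinset v).erase s(u, v)) ∩ S)
        ∪ ((G.neighborFinset u).erase v).biUnion
            (fun w => ((G.incidenceFinset w).erase s(u, w)) ∩ S)).card +
        (((G.neighborFinset v).erase u).biUnion
            (fun w => ((G.incidenceFinset w).erase s(v, w)) ∩ S)).card :=
        Finset.card_union_le _ _
    _ ≤ ((((G.incidenceFinset u).erase s(u, v)) ∪ (((G.incidenceFinset v).erase s(u, v)) ∩ S)).card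
        + (((G.neighborFinset u).erase v).biUnion
            (fun w => ((G.incidenceFinset w).erase s(u, w)) ∩ S)).card) +
        (((G.neighborFinset v).erase u).biUnion
            (fun w => ((G.incidenceFinset w).erase s(v, w)) ∩ S)).card := by
        gcongr
        exact Finset.card_union_le _ _
    _ ≤ ((((G.incidenceFinset u).erase s(u, v)).card
        + (((G.incidenceFinset v).erase s(u, v)) ∩ S).card)
        + (((G.neighborFinset u).erase v).biUnion
            (fun w => ((G.incidenceFinset w).erase s(u, w)) ∩ S)).card) +
        (((G.neighborFinset v).erase u).biUnion
            (fun w => ((G.incidenceFinset w).erase s(v, w)) ∩ S)).card := by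
        gcongr
        exact Finset.card_union_le _ _
    _ ≤ (G.degree u - 1) + kB + ku + kv := by
        rw [cardA G u v huv]
        have := cardB G u v huv (S := S)
        omega

theorem key_count (dep : V → ℕ)
    (hdep1 : ∀ a b, 3 ≤ G.degree a → 3 ≤ G.degree b → G.Adj a b →
      dep a = dep b + 1 ∨ dep b = dep a + 1)
    (hdep2 : ∀ a b c, 3 ≤ G.degree a → 3 ≤ G.degree b → 3 ≤ G.degree c →
      G.Adj a b → G.Adj a c → dep a = dep b + 1 → dep a = dep c + 1 → b = c)
    (S : Finset (Sym2 V)) (hS : S ⊆ G.edgeFinset) (hSne : S.Nonempty) :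
    ∃ e ∈ S, (conflictSet G S e).card ≤ 4 * G.maxDegree - 4 := by
  classical
  set D := G.maxDegree with hD
  have hdeg : ∀ x, G.degree x ≤ D := fun x => G.degree_le_maxDegree x
  have hdpos : ∀ {x y : V}, G.Adj x y → 1 ≤ G.degree x := by
    intro x y h
    have : y ∈ G.neighborFinset x := (SimpleGraph.mem_neighborFinset G x y).mpr h
    rw [← SimpleGraph.card_neighborFinset_eq_degree]
    exact Finset.card_pos.mpr ⟨y, this⟩
  have hNcard : ∀ (x y : V), G.Adj x y →
      ((G.neighborFinset x).erase y).card = G.degree x - 1 := by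
    intro x y h
    rw [Finset.card_erase_of_mem ((SimpleGraph.mem_neighborFinset G x y).mpr h),
      SimpleGraph.card_neighborFinset_eq_degree]
  -- the per-vertex conflict pieces
  have hsmall_bound : ∀ (x w : V), G.Adj x w → G.degree w ≤ 2 →
      (((G.incidenceFinset w).erase s(x, w)) ∩ S).card ≤ 1 := by
    intro x w h hw
    have := cardB G x w h (S := S)
    omega
  have hgen_bound : ∀ (x w : V), G.Adj x w →
      (((G.incidenceFinset w).erase s(x, w)) ∩ S).card ≤ D - 1 := by
    intro x w h
    have := cardB G x w h (S := S)
    have := hdeg w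
    omega
  have hSedge : ∀ f ∈ S, f ∈ G.edgeSet := fun f hf => SimpleGraph.mem_edgeFinset.mp (hS hf)
  by_cases hss : ∃ a b, G.Adj a b ∧ s(a, b) ∈ S ∧ G.degree a ≤ 2 ∧ G.degree b ≤ 2
  · -- Case I : an edge with both endpoints small
    obtain ⟨a, b, hab, hmem, hda, hdb⟩ := hss
    refine ⟨s(a, b), hmem, ?_⟩
    have hu := biUnion_split_bound ((G.neighborFinset a).erase b) ((G.neighborFinset a).erase b)
      subset_rfl (fun w => ((G.incidenceFinset w).erase s(a, w)) ∩ S) (D - 1)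
      (fun w hw hnw => absurd hw hnw)
      (fun w hw => hgen_bound a w
        ((SimpleGraph.mem_neighborFinset G a w).mp (Finset.mem_of_mem_erase hw)))
    have hv := biUnion_split_bound ((G.neighborFinset b).erase a) ((G.neighborFinset b).erase a)
      subset_rfl (fun w => ((G.incidenceFinset w).erase s(b, w)) ∩ S) (D - 1)
      (fun w hw hnw => absurd hw hnw)
      (fun w hw => hgen_bound b w
        ((SimpleGraph.mem_neighborFinset G b w).mp (Finset.mem_of_mem_erase hw)))
    have htot := master_bound G hS hab _ _ hu hv _ (cardB G a b hab)
    rw [hNcard a b hab, hNcard b a hab.symm] at htot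
    have h1a : 1 ≤ G.degree a := hdpos hab
    have h1b : 1 ≤ G.degree b := hdpos hab.symm
    have hDa := hdeg a
    have hDb := hdeg b
    -- resolve the products
    have hcasea : G.degree a - 1 = 0 ∨ G.degree a - 1 = 1 := by omega
    have hcaseb : G.degree b - 1 = 0 ∨ G.degree b - 1 = 1 := by omega
    rcases hcasea with h | h <;> rw [h] at htot <;>
      rcases hcaseb with h' | h' <;> rw [h'] at htot <;>
      simp only [zero_mul, one_mul] at htot <;> omega
  · -- no small-small edge: set up the maximal-depth big vertex
    have hbigedge : ∀ f ∈ S, ∃ x, x ∈ f ∧ 3 ≤ G.degree x := by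
      intro f hf
      obtain ⟨a, b, hab, rfl⟩ := edge_repr f (hSedge f hf)
      by_cases ha : 3 ≤ G.degree a
      · exact ⟨a, Sym2.mem_mk_left a b, ha⟩
      · by_cases hb : 3 ≤ G.degree b
        · exact ⟨b, Sym2.mem_mk_right a b, hb⟩
        · exact absurd ⟨a, b, hab, hf, by omega, by omega⟩ hss
    set T : Finset V := Finset.univ.filter (fun x => 3 ≤ G.degree x ∧ ∃ f ∈ S, x ∈ f) with hT
    have hTne : T.Nonempty := by
      obtain ⟨f₀, hf₀⟩ := hSne
      obtain ⟨x, hxf, hxbig⟩ := hbigedge f₀ hf₀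
      exact ⟨x, Finset.mem_filter.mpr ⟨Finset.mem_univ _, hxbig, f₀, hf₀, hxf⟩⟩
    obtain ⟨vmax, hvT, hvmax⟩ := Finset.exists_max_image T dep hTne
    rw [hT, Finset.mem_filter] at hvT
    obtain ⟨-, hbigvm, hSincvm⟩ := hvT
    have hmax : ∀ x, 3 ≤ G.degree x → (∃ f ∈ S, x ∈ f) → dep x ≤ dep vmax := by
      intro x h1 h2
      exact hvmax x (Finset.mem_filter.mpr ⟨Finset.mem_univ _, h1, h2⟩)
    by_cases hbs : ∃ a y, G.Adj a y ∧ s(a, y) ∈ S ∧ 3 ≤ G.degree a ∧ G.degree y ≤ 2 ∧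
        dep a = dep vmax
    · -- Case II : a big-small edge at maximal depth
      obtain ⟨a, y, hay, hmem, hba, hsy, hdepa⟩ := hbs
      refine ⟨s(a, y), hmem, ?_⟩
      set P : Finset V := ((G.neighborFinset a).erase y).filter
        (fun w => 3 ≤ G.degree w ∧ dep a = dep w + 1) with hP
      have hPsub : P ⊆ (G.neighborFinset a).erase y := Finset.filter_subset _ _
      have hP1 : P.card ≤ 1 := by
        rw [Finset.card_le_one]
        intro w hw w' hw'
        rw [hP, Finset.mem_filter] at hw hw'
        exact hdep2 a w w' hba hw.2.1 hw'.2.1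
          ((SimpleGraph.mem_neighborFinset G a w).mp (Finset.mem_of_mem_erase hw.1))
          ((SimpleGraph.mem_neighborFinset G a w').mp (Finset.mem_of_mem_erase hw'.1))
          hw.2.2 hw'.2.2
      have hu := biUnion_split_bound ((G.neighborFinset a).erase y) P hPsub
        (fun w => ((G.incidenceFinset w).erase s(a, w)) ∩ S) (D - 1)
        (by
          intro w hw hnw
          have hadj : G.Adj a w :=
            (SimpleGraph.mem_neighborFinset G a w).mp (Finset.mem_of_mem_erase hw)
          by_cases hwbig : 3 ≤ G.degree w
          · have hnd : ¬ (dep a = dep w + 1) := fun h => hnw (by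
              rw [hP, Finset.mem_filter]; exact ⟨hw, hwbig, h⟩)
            have hdw : dep w = dep a + 1 := by
              rcases hdep1 a w hba hwbig hadj with h | h
              · exact absurd h hnd
              · exact h
            have hempty : ((G.incidenceFinset w).erase s(a, w)) ∩ S = ∅ := by
              rw [Finset.eq_empty_iff_forall_notMem]
              intro f hf
              rw [Finset.mem_inter, Finset.mem_erase, SimpleGraph.mem_incidenceFinset] at hf
              obtain ⟨⟨hne, hfe, hwf⟩, hfS⟩ := hf
              have := hmax w hwbig ⟨f, hfS, hwf⟩
              omega
            simp [hempty]
          · exact hsmall_bound a w hadj (by omega))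
        (fun w hw => hgen_bound a w
          ((SimpleGraph.mem_neighborFinset G a w).mp (Finset.mem_of_mem_erase (hPsub hw))))
      have hv := biUnion_split_bound ((G.neighborFinset y).erase a) ((G.neighborFinset y).erase a)
        subset_rfl (fun w => ((G.incidenceFinset w).erase s(y, w)) ∩ S) (D - 1)
        (fun w hw hnw => absurd hw hnw)
        (fun w hw => hgen_bound y w
          ((SimpleGraph.mem_neighborFinset G y w).mp (Finset.mem_of_mem_erase hw)))
      have htot := master_bound G hS hay _ _ hu hv _ (cardB G a y hay)
      rw [hNcard a y hay] at htot
      rw [hNcard y a hay.symm] at hv htot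
      have h1y : 1 ≤ G.degree y := hdpos hay.symm
      have hDa := hdeg a
      have hDy := hdeg y
      have hPN : P.card ≤ G.degree a - 1 := by
        have := Finset.card_le_card hPsub
        rw [hNcard a y hay] at this
        exact this
      have hcasey : G.degree y - 1 = 0 ∨ G.degree y - 1 = 1 := by omega
      have hcasep : P.card = 0 ∨ P.card = 1 := by omega
      rcases hcasey with h | h <;> rw [h] at htot <;>
        rcases hcasep with h' | h' <;> rw [h'] at htot <;>
        simp only [zero_mul, one_mul] at htot <;> omega
    · -- Case III : a big-big edge at maximal depth
      obtain ⟨f₀, hf₀S, hvf₀⟩ := hSincvm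
      obtain ⟨u, hadj, hf₀⟩ := edge_other f₀ (hSedge f₀ hf₀S) vmax hvf₀
      have hmemS : s(u, vmax) ∈ S := by
        rw [Sym2.eq_swap]
        exact hf₀ ▸ hf₀S
      have huS : ∃ f ∈ S, u ∈ f := ⟨s(u, vmax), hmemS, Sym2.mem_mk_left u vmax⟩
      have hbu : 3 ≤ G.degree u := by
        by_contra hsu
        exact hbs ⟨vmax, u, hadj, hf₀ ▸ hf₀S, hbigvm, by omega, rfl⟩
      have hdvm : dep vmax = dep u + 1 := by
        rcases hdep1 vmax u hbigvm hbu hadj with h | h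
        · exact h
        · have := hmax u hbu huS
          omega
      have huv : G.Adj u vmax := hadj.symm
      refine ⟨s(u, vmax), hmemS, ?_⟩
      -- B part is empty
      have hBempty : ((G.incidenceFinset vmax).erase s(u, vmax)) ∩ S = ∅ := by
        rw [Finset.eq_empty_iff_forall_notMem]
        intro f hf
        rw [Finset.mem_inter, Finset.mem_erase, SimpleGraph.mem_incidenceFinset] at hf
        obtain ⟨⟨hne, hfe, hvf⟩, hfS⟩ := hf
        obtain ⟨z, hvz, hfz⟩ := edge_other f hfe vmax hvf
        by_cases hzbig : 3 ≤ G.degree z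
        · rcases hdep1 vmax z hbigvm hzbig hvz with h | h
          · have : z = u := hdep2 vmax z u hbigvm hzbig hbu hvz hadj h hdvm
            rw [this] at hfz
            rw [hfz, Sym2.eq_swap] at hne
            exact hne rfl
          · have := hmax z hzbig ⟨f, hfS, by rw [hfz]; exact Sym2.mem_mk_right vmax z⟩
            omega
        · exact hbs ⟨vmax, z, hvz, hfz ▸ hfS, hbigvm, by omega, rfl⟩
      -- the u side
      set P : Finset V := ((G.neighborFinset u).erase vmax).filter
        (fun w => 3 ≤ G.degree w ∧ dep u = dep w + 1) with hP
      have hPsub : P ⊆ (G.neighborFinset u).erase vmax := Finset.filter_subset _ _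
      have hP1 : P.card ≤ 1 := by
        rw [Finset.card_le_one]
        intro w hw w' hw'
        rw [hP, Finset.mem_filter] at hw hw'
        exact hdep2 u w w' hbu hw.2.1 hw'.2.1
          ((SimpleGraph.mem_neighborFinset G u w).mp (Finset.mem_of_mem_erase hw.1))
          ((SimpleGraph.mem_neighborFinset G u w').mp (Finset.mem_of_mem_erase hw'.1))
          hw.2.2 hw'.2.2
      have hu := biUnion_split_bound ((G.neighborFinset u).erase vmax) P hPsub
        (fun w => ((G.incidenceFinset w).erase s(u, w)) ∩ S) (D - 1)
        (by
          intro w hw hnw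
          have hadjw : G.Adj u w :=
            (SimpleGraph.mem_neighborFinset G u w).mp (Finset.mem_of_mem_erase hw)
          by_cases hwbig : 3 ≤ G.degree w
          · have hnd : ¬ (dep u = dep w + 1) := fun h => hnw (by
              rw [hP, Finset.mem_filter]; exact ⟨hw, hwbig, h⟩)
            have hdw : dep w = dep u + 1 := by
              rcases hdep1 u w hbu hwbig hadjw with h | h
              · exact absurd h hnd
              · exact h
            have hempty : ((G.incidenceFinset w).erase s(u, w)) ∩ S = ∅ := by
              rw [Finset.eq_empty_iff_forall_notMem]
              intro f hf
              rw [Finset.mem_inter, Finset.mem_erase, SimpleGraph.mem_incidenceFinset] at hf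
              obtain ⟨⟨hne, hfe, hwf⟩, hfS⟩ := hf
              obtain ⟨z, hwz, hfz⟩ := edge_other f hfe w hwf
              by_cases hzbig : 3 ≤ G.degree z
              · rcases hdep1 w z hwbig hzbig hwz with h | h
                · have : z = u := hdep2 w z u hwbig hzbig hbu hwz hadjw.symm h (by omega)
                  rw [this] at hfz
                  rw [hfz, Sym2.eq_swap] at hne
                  exact hne rfl
                · have := hmax z hzbig ⟨f, hfS, by rw [hfz]; exact Sym2.mem_mk_right w z⟩
                  omega
              · exact hbs ⟨w, z, hwz, hfz ▸ hfS, hwbig, by omega, by omega⟩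
            simp [hempty]
          · exact hsmall_bound u w hadjw (by omega))
        (fun w hw => hgen_bound u w
          ((SimpleGraph.mem_neighborFinset G u w).mp (Finset.mem_of_mem_erase (hPsub hw))))
      -- the vmax side : every piece has at most one element
      have hv := biUnion_split_bound ((G.neighborFinset vmax).erase u) ∅
        (Finset.empty_subset _) (fun w => ((G.incidenceFinset w).erase s(vmax, w)) ∩ S) 0
        (by
          intro x hx _
          have hadjx : G.Adj vmax x :=
            (SimpleGraph.mem_neighborFinset G vmax x).mp (Finset.mem_of_mem_erase hx)
          have hxu : x ≠ u := (Finset.mem_erase.mp hx).1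
          by_cases hxbig : 3 ≤ G.degree x
          · rcases hdep1 vmax x hbigvm hxbig hadjx with h | h
            · exact absurd (hdep2 vmax x u hbigvm hxbig hbu hadjx hadj h hdvm) hxu
            · have hempty : ((G.incidenceFinset x).erase s(vmax, x)) ∩ S = ∅ := by
                rw [Finset.eq_empty_iff_forall_notMem]
                intro f hf
                rw [Finset.mem_inter, Finset.mem_erase, SimpleGraph.mem_incidenceFinset] at hf
                obtain ⟨⟨hne, hfe, hxf⟩, hfS⟩ := hf
                have := hmax x hxbig ⟨f, hfS, hxf⟩
                omega
              simp [hempty]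
          · exact hsmall_bound vmax x hadjx (by omega))
        (fun w hw => absurd hw (Finset.notMem_empty w))
      have htot := master_bound G hS huv _ _ hu hv _ (le_of_eq (by rw [hBempty, Finset.card_empty]))
      rw [hNcard u vmax huv] at htot
      rw [hNcard vmax u hadj] at hv htot
      have hDu := hdeg u
      have hDv := hdeg vmax
      have hPN : P.card ≤ G.degree u - 1 := by
        have := Finset.card_le_card hPsub
        rw [hNcard u vmax huv] at this
        exact this
      have hcasep : P.card = 0 ∨ P.card = 1 := by omega
      rcases hcasep with h' | h' <;> rw [h'] at htot <;>
        simp only [zero_mul, one_mul, Finset.card_empty] at htot <;> omega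

end


section
variable [Fintype V] (G : SimpleGraph V) [DecidableRel G.Adj]

lemma greedy (L : Sym2 V → Finset ℕ)
    (hL : ∀ e ∈ G.edgeSet, 4 * G.maxDegree - 3 ≤ (L e).card)
    (hkey : ∀ S : Finset (Sym2 V), S ⊆ G.edgeFinset → S.Nonempty →
      ∃ e ∈ S, (conflictSet G S e).card ≤ 4 * G.maxDegree - 4) :
    ∀ (n : ℕ) (S : Finset (Sym2 V)), S.card ≤ n → S ⊆ G.edgeFinset →
      ∃ C : Sym2 V → ℕ, (∀ e ∈ S, C e ∈ L e) ∧
        ∀ e ∈ S, ∀ f ∈ S, e ≠ f → conflictRel G e f → C e ≠ C f := by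
  classical
  intro n
  induction n with
  | zero =>
    intro S hcard _
    have : S = ∅ := Finset.card_eq_zero.mp (Nat.le_zero.mp hcard)
    subst this
    exact ⟨fun _ => 0, by simp, by simp⟩
  | succ n ih =>
    intro S hcard hSsub
    rcases S.eq_empty_or_nonempty with rfl | hSne
    · exact ⟨fun _ => 0, by simp, by simp⟩
    obtain ⟨e, heS, hconf⟩ := hkey S hSsub hSne
    have heE : e ∈ G.edgeSet := SimpleGraph.mem_edgeFinset.mp (hSsub heS)
    set S' := S.erase e with hS'
    have hS'card : S'.card ≤ n := by
      rw [hS', Finset.card_erase_of_mem heS]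
      have := Finset.card_pos.mpr hSne
      omega
    obtain ⟨C, hC1, hC2⟩ := ih S' hS'card (fun f hf => hSsub (Finset.mem_of_mem_erase hf))
    have hD1 : 1 ≤ G.maxDegree := by
      obtain ⟨a, b, hab, -⟩ := edge_repr e heE
      have h1 : 0 < G.degree a := by
        rw [← SimpleGraph.card_neighborFinset_eq_degree]
        exact Finset.card_pos.mpr ⟨b, (SimpleGraph.mem_neighborFinset G a b).mpr hab⟩
      exact le_trans h1 (G.degree_le_maxDegree a)
    have hforb : ((conflictSet G S e).image C).card < (L e).card := by
      calc ((conflictSet G S e).image C).card ≤ (conflictSet G S e).card :=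
            Finset.card_image_le
        _ ≤ 4 * G.maxDegree - 4 := hconf
        _ < 4 * G.maxDegree - 3 := by omega
        _ ≤ (L e).card := hL e heE
    have hnonempty : (L e \ (conflictSet G S e).image C).Nonempty := by
      rw [← Finset.card_pos]
      have := Finset.le_card_sdiff ((conflictSet G S e).image C) (L e)
      omega
    obtain ⟨c, hc⟩ := hnonempty
    rw [Finset.mem_sdiff] at hc
    refine ⟨Function.update C e c, ?_, ?_⟩
    · intro f hf
      rcases eq_or_ne f e with rfl | hne
      · rw [Function.update_self]
        exact hc.1
      · rw [Function.update_of_ne hne]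
        exact hC1 f (Finset.mem_erase.mpr ⟨hne, hf⟩)
    · intro f hf g hg hfg hrel
      rcases eq_or_ne f e with rfl | hfe
      · have hge : g ≠ f := fun h => hfg h.symm
        rw [Function.update_self, Function.update_of_ne hge]
        intro h
        exact hc.2 (Finset.mem_image.mpr ⟨g,
          mem_conflictSet.mpr ⟨hg, hge, hrel⟩, h.symm⟩)
      · rcases eq_or_ne g e with rfl | hge
        · rw [Function.update_self, Function.update_of_ne hfe]
          intro h
          exact hc.2 (Finset.mem_image.mpr ⟨f,
            mem_conflictSet.mpr ⟨hf, hfe, conflictRel_symm hrel⟩, h⟩)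
        · rw [Function.update_of_ne hfe, Function.update_of_ne hge]
          exact hC2 f (Finset.mem_erase.mpr ⟨hfe, hf⟩) g (Finset.mem_erase.mpr ⟨hge, hg⟩)
            hfg hrel

end

end StrongEdgeAux

/-- A strong edge coloring: any two distinct edges that are adjacent or both
adjacent to a common third edge receive distinct colors. -/
def SimpleGraph.IsStrongEdgeColoring {V : Type*} (G : SimpleGraph V)
    (C : Sym2 V → ℕ) : Prop :=
  ∀ e ∈ G.edgeSet, ∀ f ∈ G.edgeSet, e ≠ f →
    ((∃ v, v ∈ e ∧ v ∈ f) ∨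
      ∃ g ∈ G.edgeSet, (∃ v, v ∈ e ∧ v ∈ g) ∧ ∃ w, w ∈ g ∧ w ∈ f) →
    C e ≠ C f

/-- The strong chromatic index: the least number of colors in a strong edge
coloring of `G`. -/
noncomputable def SimpleGraph.strongChromaticIndex {V : Type*}
    (G : SimpleGraph V) : ℕ :=
  sInf {n | ∃ C : Sym2 V → ℕ, (∀ e ∈ G.edgeSet, C e < n) ∧
    G.IsStrongEdgeColoring C}

/-- A graph is `k`-degenerate if every (induced) subgraph on a nonempty vertex
set has a vertex of degree at most `k` in that subgraph. -/
def SimpleGraph.Degenerate {V : Type*} [Fintype V] (G : SimpleGraph V)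
    [DecidableRel G.Adj] (k : ℕ) : Prop :=
  ∀ S : Finset V, S.Nonempty → ∃ v ∈ S, (S.filter (G.Adj v)).card ≤ k

theorem list_strong_edge_coloring_of_big_vertices_forest {V : Type*}
    [Fintype V] (G : SimpleGraph V) [DecidableRel G.Adj]
    (hforest : (G.induce {v : V | 3 ≤ G.degree v}).IsAcyclic)
    (L : Sym2 V → Finset ℕ)
    (hL : ∀ e ∈ G.edgeSet, 4 * G.maxDegree - 3 ≤ (L e).card) :
    ∃ C : Sym2 V → ℕ, (∀ e ∈ G.edgeSet, C e ∈ L e) ∧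
      G.IsStrongEdgeColoring C := by
  classical
  obtain ⟨dep, hdep1, hdep2⟩ := exists_dep G hforest
  obtain ⟨C, hC1, hC2⟩ := greedy G L hL
    (fun S hSsub hSne => key_count G dep hdep1 hdep2 S hSsub hSne)
    G.edgeFinset.card G.edgeFinset le_rfl subset_rfl
  refine ⟨C, fun e he => hC1 e (SimpleGraph.mem_edgeFinset.mpr he), ?_⟩
  intro e he f hf hne hcond
  exact hC2 e (SimpleGraph.mem_edgeFinset.mpr he) f (SimpleGraph.mem_edgeFinset.mpr hf) hne hcond
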